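/- Let u : ℝ^N → ℝ be a C³ function with bounded third derivatives, k₀ nonnegative, radially symmetric, supported in the unit ball with ∫ k₀ = 1, and set C = (½ ∫ k₀(z) z_N² dz)⁻¹ and ν_δ = C/δ². Then there is a constant M (depending on the C³ bound of u) such that for all x ∈ ℝ^N and all 0 < δ ≤ 1, |ν_δ ∫_{ℝ^N} k_δ(y - x)(u(y) - u(x)) dy − Δu(x)| ≤ M δ. -/

import Mathlib

/-!
After the substitution `y = x + δ • z` the nonlocal operator becomes
`C / δ² * ∫ k₀ z * (u (x + δ • z) - u x) dz`. Expanding `u (x + δ • z)` to second order, the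
first-order term integrates to zero because `k₀` is even, and since `k₀` is invariant under
reflections and permutations of coordinates, `∫ k₀ z * D²u x z z = S * Δu x` with
`S = ∫ k₀ z * z_N²`. This `S` is positive (coordinate hyperplanes are null), and `C * S = 2`
cancels the factor `δ² / 2`. The Taylor remainder is at most `C₃ * ‖δ • z‖³ ≤ C₃ * δ³` on the
unit ball, which contains the support of `k₀`; dividing by `δ²` leaves `C * C₃ * δ`.
-/

open MeasureTheory

section Taylor

variable {E F : Type*} [NormedAddCommGroup E] [NormedSpace ℝ E]
  [NormedAddCommGroup F] [NormedSpace ℝ F]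

theorem norm_sub_le_mul_norm_pow_of_hasFDerivAt {f : E → F} {f' : E → E →L[ℝ] F} {x : E}
    {K : ℝ} {n : ℕ} (hf : ∀ y, HasFDerivAt f (f' y) y) (hK : 0 ≤ K)
    (hf' : ∀ y, ‖f' y‖ ≤ K * ‖y - x‖ ^ n) (v : E) :
    ‖f (x + v) - f x‖ ≤ K * ‖v‖ ^ (n + 1) := by
  have hball : ∀ y ∈ Metric.closedBall x ‖v‖, ‖f' y‖ ≤ K * ‖v‖ ^ n := fun y hy =>
    (hf' y).trans <| by
      gcongr
      simpa [dist_eq_norm] using hy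
  calc ‖f (x + v) - f x‖ ≤ K * ‖v‖ ^ n * ‖x + v - x‖ :=
        (convex_closedBall x ‖v‖).norm_image_sub_le_of_norm_hasFDerivWithin_le
          (fun y _ => (hf y).hasFDerivWithinAt) hball
          (Metric.mem_closedBall_self (norm_nonneg v)) (by simp)
    _ = K * ‖v‖ ^ (n + 1) := by rw [add_sub_cancel_left, pow_succ, mul_assoc]

theorem norm_sub_le_of_norm_iteratedFDeriv_one_le {g : E → F} (hg : Differentiable ℝ g) {K : ℝ}
    (hK : ∀ z, ‖iteratedFDeriv ℝ 1 g z‖ ≤ K) (x y : E) : ‖g y - g x‖ ≤ K * ‖y - x‖ :=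
  convex_univ.norm_image_sub_le_of_norm_fderiv_le (fun z _ => hg z)
    (fun z _ => (norm_iteratedFDeriv_one g).ge.trans (hK z)) (Set.mem_univ x) (Set.mem_univ y)

theorem hasFDerivAt_half_apply_sub_sub {B : E →L[ℝ] E →L[ℝ] ℝ} (hB : ∀ v w, B v w = B w v)
    (x y : E) : HasFDerivAt (fun z => 1 / 2 * B (z - x) (z - x)) (B (y - x)) y := by
  have hlin := (hasFDerivAt_id (𝕜 := ℝ) y).sub_const x
  refine ((B.hasFDerivAt_of_bilinear hlin hlin).const_mul (1 / 2 : ℝ)).congr_fderiv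
    (ContinuousLinearMap.ext fun w => ?_)
  simp only [smul_apply, add_apply, ContinuousLinearMap.precompR_apply,
    ContinuousLinearMap.precompL_apply, ContinuousLinearMap.compL_apply,
    ContinuousLinearMap.comp_apply, ContinuousLinearMap.coe_id', id_eq, smul_eq_mul, hB w]
  ring

theorem fderiv_clm_apply_const {G : Type*} [NormedAddCommGroup G] [NormedSpace ℝ G]
    {c : E → F →L[ℝ] G} {x : E} (hc : DifferentiableAt ℝ c x) (v : F) :
    fderiv ℝ (fun y => c y v) x = (fderiv ℝ c x).flip v := by
  simp [fderiv_clm_apply hc (differentiableAt_const v)]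

variable {u : E → ℝ} {C₃ : ℝ} (hu : ContDiff ℝ 3 u)
  (hC₃ : ∀ z, ‖iteratedFDeriv ℝ 3 u z‖ ≤ C₃)
include hu hC₃

theorem norm_fderiv_fderiv_sub_le (x y : E) :
    ‖fderiv ℝ (fderiv ℝ u) y - fderiv ℝ (fderiv ℝ u) x‖ ≤ C₃ * ‖y - x‖ := by
  have hd : Differentiable ℝ (fderiv ℝ (fderiv ℝ u)) :=
    ((hu.fderiv_right (m := 2) le_rfl).fderiv_right (m := 1) le_rfl).differentiable one_ne_zero
  -- Going through `iteratedFDeriv` avoids the norm on `E →L[ℝ] E →L[ℝ] E →L[ℝ] ℝ`,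
  -- which instance search does not find.
  refine norm_sub_le_of_norm_iteratedFDeriv_one_le (g := fderiv ℝ (fderiv ℝ u)) hd
    (fun z => ?_) x y
  rw [norm_iteratedFDeriv_fderiv, norm_iteratedFDeriv_fderiv]
  exact hC₃ z

theorem norm_fderiv_sub_sub_le (x v : E) :
    ‖fderiv ℝ u (x + v) - fderiv ℝ u x - fderiv ℝ (fderiv ℝ u) x v‖ ≤ C₃ * ‖v‖ ^ 2 := by
  have hd : Differentiable ℝ (fderiv ℝ u) :=
    (hu.fderiv_right (m := 2) le_rfl).differentiable two_ne_zero
  have hderiv : ∀ y, HasFDerivAt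
      (fun y => fderiv ℝ u y - fderiv ℝ u x - fderiv ℝ (fderiv ℝ u) x (y - x))
      (fderiv ℝ (fderiv ℝ u) y - fderiv ℝ (fderiv ℝ u) x) y := fun y =>
    ((hd y).hasFDerivAt.sub_const _).sub
      ((fderiv ℝ (fderiv ℝ u) x).hasFDerivAt.comp y ((hasFDerivAt_id y).sub_const x))
  have h := norm_sub_le_mul_norm_pow_of_hasFDerivAt hderiv ((norm_nonneg _).trans (hC₃ x))
    (fun y => by rw [pow_one]; exact norm_fderiv_fderiv_sub_le hu hC₃ x y) v
  simpa using h

theorem abs_sub_sub_fderiv_sub_fderiv_fderiv_le (x v : E) :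
    |u (x + v) - u x - fderiv ℝ u x v - 1 / 2 * fderiv ℝ (fderiv ℝ u) x v v| ≤ C₃ * ‖v‖ ^ 3 := by
  have hd : Differentiable ℝ u := hu.differentiable three_ne_zero
  have hsymm : IsSymmSndFDerivAt ℝ u x := hu.contDiffAt.isSymmSndFDerivAt (by norm_num)
  have hderiv : ∀ y, HasFDerivAt
      (fun y => u y - u x - fderiv ℝ u x (y - x) - 1 / 2 * fderiv ℝ (fderiv ℝ u) x (y - x) (y - x))
      (fderiv ℝ u y - fderiv ℝ u x - fderiv ℝ (fderiv ℝ u) x (y - x)) y := fun y =>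
    (((hd y).hasFDerivAt.sub_const (u x)).sub ((fderiv ℝ u x).hasFDerivAt.comp y
      ((hasFDerivAt_id y).sub_const x))).sub (hasFDerivAt_half_apply_sub_sub hsymm.eq x y)
  have h := norm_sub_le_mul_norm_pow_of_hasFDerivAt hderiv ((norm_nonneg _).trans (hC₃ x))
    (fun y => by simpa using norm_fderiv_sub_sub_le hu hC₃ x (y - x)) v
  simpa using h

end Taylor

section Kernel

variable {E : Type*} [NormedAddCommGroup E] {k g : E → ℝ} {B : ℝ}

theorem norm_mul_le_of_abs_le_on_closedBall (hk_supp : ∀ z, 1 < ‖z‖ → k z = 0)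
    (hgB : ∀ z, ‖z‖ ≤ 1 → |g z| ≤ B) (z : E) : ‖k z * g z‖ ≤ B * |k z| := by
  rw [Real.norm_eq_abs, abs_mul, mul_comm]
  rcases le_or_gt ‖z‖ 1 with hz | hz
  · exact mul_le_mul_of_nonneg_right (hgB z hz) (abs_nonneg _)
  · simp [hk_supp z hz]

variable [MeasurableSpace E] {μ : Measure E}

theorem abs_integral_mul_le_of_abs_le_on_closedBall (hk : Integrable k μ)
    (hk_supp : ∀ z, 1 < ‖z‖ → k z = 0) (hgB : ∀ z, ‖z‖ ≤ 1 → |g z| ≤ B) :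
    |∫ z, k z * g z ∂μ| ≤ B * ∫ z, |k z| ∂μ := by
  rw [← integral_const_mul, ← Real.norm_eq_abs]
  exact norm_integral_le_of_norm_le (hk.abs.const_mul B)
    (.of_forall (norm_mul_le_of_abs_le_on_closedBall hk_supp hgB))

theorem integrable_mul_of_continuous [ProperSpace E] [OpensMeasurableSpace E]
    (hk : Integrable k μ) (hk_supp : ∀ z, 1 < ‖z‖ → k z = 0) (hg : Continuous g) :
    Integrable (fun z => k z * g z) μ := by
  obtain ⟨B, hB⟩ := (isCompact_closedBall (0 : E) 1).exists_bound_of_continuousOn hg.continuousOn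
  exact (hk.abs.const_mul B).mono' (hk.aestronglyMeasurable.mul hg.aestronglyMeasurable)
    (.of_forall <| norm_mul_le_of_abs_le_on_closedBall hk_supp
      fun z hz => by simpa using hB z (by simpa using hz))

end Kernel

section Rescaling

variable {E : Type*} [NormedAddCommGroup E] [NormedSpace ℝ E] [MeasurableSpace E] [BorelSpace E]
  [FiniteDimensional ℝ E] (μ : Measure E) [μ.IsAddHaarMeasure]

theorem integral_rescaled_mul_eq (k g : E → ℝ) (x : E) {δ : ℝ} (hδ : 0 < δ) :
    ∫ y, (δ ^ Module.finrank ℝ E)⁻¹ * k (δ⁻¹ • (y - x)) * g y ∂μ =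
      ∫ z, k z * g (x + δ • z) ∂μ := by
  have h := Measure.integral_comp_smul_of_nonneg μ (fun w => k (δ⁻¹ • w) * g (x + w)) δ
    (hR := hδ.le)
  simp only [smul_smul, inv_mul_cancel₀ hδ.ne', one_smul] at h
  rw [h, smul_eq_mul, ← integral_const_mul,
    ← integral_sub_right_eq_self
      (fun w => (δ ^ Module.finrank ℝ E)⁻¹ * (k (δ⁻¹ • w) * g (x + w))) x]
  simp only [add_sub_cancel, mul_assoc]

end Rescaling

section Radial

variable {E : Type*} [NormedAddCommGroup E] [InnerProductSpace ℝ E] [FiniteDimensional ℝ E]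
  [MeasurableSpace E] [BorelSpace E] {k : E → ℝ}

theorem integral_mul_comp_linearIsometryEquiv (hk : ∀ z z', ‖z‖ = ‖z'‖ → k z = k z')
    (e : E ≃ₗᵢ[ℝ] E) (f : E → ℝ) : ∫ z, k z * f (e z) = ∫ z, k z * f z := by
  rw [← integral_comp e (fun z => k z * f z)]
  simp only [hk (e _) _ (e.norm_map _)]

theorem integral_mul_clm_eq_zero (hk : ∀ z z', ‖z‖ = ‖z'‖ → k z = k z') (L : E →L[ℝ] ℝ) :
    ∫ z, k z * L z = 0 := by
  have h := integral_mul_comp_linearIsometryEquiv hk (.neg ℝ) L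
  simp only [LinearIsometryEquiv.coe_neg, map_neg, mul_neg, integral_neg] at h
  linarith

end Radial

section Coordinates

variable {ι : Type*} [Fintype ι] [DecidableEq ι] {k : EuclideanSpace ℝ ι → ℝ}

theorem integral_mul_coord_mul_coord_eq_zero (hk : ∀ z z', ‖z‖ = ‖z'‖ → k z = k z') {i j : ι}
    (hij : i ≠ j) : ∫ z, k z * (z i * z j) = 0 := by
  let e : EuclideanSpace ℝ ι ≃ₗᵢ[ℝ] EuclideanSpace ℝ ι := LinearIsometryEquiv.piLpCongrRight 2
    fun l => if l = i then LinearIsometryEquiv.neg ℝ else LinearIsometryEquiv.refl ℝ ℝ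
  have h := integral_mul_comp_linearIsometryEquiv hk e fun z => z i * z j
  simp only [e, LinearIsometryEquiv.piLpCongrRight_apply, ↓reduceIte, hij.symm,
    LinearIsometryEquiv.coe_neg, LinearIsometryEquiv.coe_refl, id_eq, neg_mul, mul_neg,
    integral_neg] at h
  linarith

theorem integral_mul_coord_sq_eq (hk : ∀ z z', ‖z‖ = ‖z'‖ → k z = k z') (i j : ι) :
    ∫ z, k z * z i ^ 2 = ∫ z, k z * z j ^ 2 := by
  have h := integral_mul_comp_linearIsometryEquiv hk
    (LinearIsometryEquiv.piLpCongrLeft 2 ℝ ℝ (Equiv.swap i j)) fun z => z j ^ 2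
  simpa [Equiv.piCongrLeft', Equiv.symm_swap] using h

theorem ae_coord_ne_zero (i : ι) : ∀ᵐ z : EuclideanSpace ℝ ι, z i ≠ 0 := by
  have hker : LinearMap.ker (EuclideanSpace.projₗ (𝕜 := ℝ) (ι := ι) i) ≠ ⊤ := by
    intro h
    have hmem : EuclideanSpace.single i (1 : ℝ) ∈ LinearMap.ker (EuclideanSpace.projₗ i) :=
      h ▸ Submodule.mem_top
    simp at hmem
  rw [ae_iff]
  push Not
  exact Measure.addHaar_submodule volume _ hker

theorem integral_mul_coord_sq_pos (hk_int : Integrable k) (hk_nonneg : ∀ z, 0 ≤ k z)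
    (hk_supp : ∀ z, 1 < ‖z‖ → k z = 0) (hk_ne : ∫ z, k z ≠ 0) (i : ι) :
    0 < ∫ z, k z * z i ^ 2 := by
  have hnonneg : ∀ z, 0 ≤ k z * z i ^ 2 := fun z => mul_nonneg (hk_nonneg z) (sq_nonneg _)
  refine (integral_nonneg hnonneg).lt_of_ne fun h => hk_ne ?_
  have hzero := (integral_eq_zero_iff_of_nonneg hnonneg
    (integrable_mul_of_continuous hk_int hk_supp (by fun_prop))).mp h.symm
  refine integral_eq_zero_of_ae ?_
  filter_upwards [hzero, ae_coord_ne_zero i] with z hz hzi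
  simpa [hzi] using hz

theorem clm_apply_self_eq_sum_single (B : EuclideanSpace ℝ ι →L[ℝ] EuclideanSpace ℝ ι →L[ℝ] ℝ)
    (z : EuclideanSpace ℝ ι) :
    B z z = ∑ i, ∑ j, z i * z j * B (EuclideanSpace.single i 1) (EuclideanSpace.single j 1) := by
  conv_lhs => rw [← (EuclideanSpace.basisFun ι ℝ).sum_repr z]
  simp only [EuclideanSpace.basisFun_repr, EuclideanSpace.basisFun_apply, map_sum, map_smul,
    sum_apply, smul_apply, smul_eq_mul, Finset.mul_sum, mul_assoc]
  rw [Finset.sum_comm]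
  exact Finset.sum_congr rfl fun _ _ => Finset.sum_congr rfl fun _ _ => mul_left_comm _ _ _

theorem integral_mul_apply_self (hk : ∀ z z', ‖z‖ = ‖z'‖ → k z = k z') (hk_int : Integrable k)
    (hk_supp : ∀ z, 1 < ‖z‖ → k z = 0)
    (B : EuclideanSpace ℝ ι →L[ℝ] EuclideanSpace ℝ ι →L[ℝ] ℝ) (i₀ : ι) :
    ∫ z, k z * B z z = (∫ z, k z * z i₀ ^ 2) *
      ∑ i, B (EuclideanSpace.single i 1) (EuclideanSpace.single i 1) := by
  have hint : ∀ i j, Integrable fun z : EuclideanSpace ℝ ι => k z * (z i * z j) := fun i j =>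
    integrable_mul_of_continuous hk_int hk_supp (by fun_prop)
  calc ∫ z, k z * B z z = ∑ i, ∑ j, (∫ z, k z * (z i * z j)) *
        B (EuclideanSpace.single i 1) (EuclideanSpace.single j 1) := by
        have hexpand : (fun z => k z * B z z) = fun z => ∑ i, ∑ j, k z * (z i * z j) *
            B (EuclideanSpace.single i 1) (EuclideanSpace.single j 1) := by
          funext z
          simp only [clm_apply_self_eq_sum_single B z, Finset.mul_sum, mul_assoc]
        rw [hexpand, integral_finsetSum _ fun i _ =>
          integrable_finsetSum _ fun j _ => (hint i j).mul_const _]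
        refine Finset.sum_congr rfl fun i _ => ?_
        rw [integral_finsetSum _ fun j _ => (hint i j).mul_const _]
        exact Finset.sum_congr rfl fun j _ => integral_mul_const _ _
    _ = ∑ i, (∫ z, k z * z i₀ ^ 2) *
        B (EuclideanSpace.single i 1) (EuclideanSpace.single i 1) := by
        refine Finset.sum_congr rfl fun i _ => ?_
        rw [Finset.sum_eq_single i (fun j _ hji => by
            rw [integral_mul_coord_mul_coord_eq_zero hk hji.symm, zero_mul]) (by simp),
          ← integral_mul_coord_sq_eq hk i i₀]
        simp_rw [← sq]
    _ = _ := (Finset.mul_sum ..).symm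

end Coordinates

section Consistency

variable {ι : Type*} [Fintype ι] [DecidableEq ι] {k u : EuclideanSpace ℝ ι → ℝ} {C₃ : ℝ}

theorem abs_integral_mul_sub_sub_laplacian_le (hk_int : Integrable k) (hk_nonneg : ∀ z, 0 ≤ k z)
    (hk_sym : ∀ z z', ‖z‖ = ‖z'‖ → k z = k z') (hk_supp : ∀ z, 1 < ‖z‖ → k z = 0)
    (hk_total : ∫ z, k z = 1) (hu : ContDiff ℝ 3 u)
    (hC₃ : ∀ z, ‖iteratedFDeriv ℝ 3 u z‖ ≤ C₃) (x : EuclideanSpace ℝ ι) {δ : ℝ} (hδ : 0 ≤ δ)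
    (i₀ : ι) :
    |(∫ z, k z * (u (x + δ • z) - u x)) - δ ^ 2 / 2 * (∫ z, k z * z i₀ ^ 2) *
      ∑ i, fderiv ℝ (fderiv ℝ u) x (EuclideanSpace.single i 1) (EuclideanSpace.single i 1)|
      ≤ C₃ * δ ^ 3 := by
  set L := fderiv ℝ u x
  set H := fderiv ℝ (fderiv ℝ u) x
  set R := fun z => u (x + δ • z) - u x - L (δ • z) - 1 / 2 * H (δ • z) (δ • z)
  have hR : ∀ z, ‖z‖ ≤ 1 → |R z| ≤ C₃ * δ ^ 3 := fun z hz => by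
    have hC₃0 : 0 ≤ C₃ := (norm_nonneg _).trans (hC₃ x)
    refine (abs_sub_sub_fderiv_sub_fderiv_fderiv_le hu hC₃ x (δ • z)).trans ?_
    rw [norm_smul, Real.norm_of_nonneg hδ]
    gcongr
    exact mul_le_of_le_one_right hδ hz
  have hLint : Integrable fun z => k z * L z :=
    integrable_mul_of_continuous hk_int hk_supp L.continuous
  have hHint : Integrable fun z => k z * H z z :=
    integrable_mul_of_continuous hk_int hk_supp (by fun_prop)
  have hRint : Integrable fun z => k z * R z :=
    integrable_mul_of_continuous hk_int hk_supp (by fun_prop)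
  have hsplit : ∫ z, k z * (u (x + δ • z) - u x) =
      δ * (∫ z, k z * L z) + δ ^ 2 / 2 * (∫ z, k z * H z z) + ∫ z, k z * R z := by
    rw [← integral_const_mul, ← integral_const_mul, ← integral_add (hLint.const_mul _)
      (hHint.const_mul _), ← integral_add _ hRint]
    · congr 1 with z
      simp only [R, map_smul, smul_apply, smul_eq_mul]
      ring
    · exact (hLint.const_mul _).add (hHint.const_mul _)
  rw [hsplit, integral_mul_clm_eq_zero hk_sym L,
    integral_mul_apply_self hk_sym hk_int hk_supp H i₀]
  calc _ = |∫ z, k z * R z| := by ring_nf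
    _ ≤ C₃ * δ ^ 3 * ∫ z, |k z| := abs_integral_mul_le_of_abs_le_on_closedBall hk_int hk_supp hR
    _ = C₃ * δ ^ 3 := by simp only [abs_of_nonneg (hk_nonneg _), hk_total, mul_one]

end Consistency

/-- Consistency estimate: the rescaled nonlocal operator approximates the Laplacian at rate δ. -/
theorem nonlocal_approximates_laplacian (N : ℕ) (hN : 0 < N)
    (u : EuclideanSpace ℝ (Fin N) → ℝ)
    (hu : ContDiff ℝ 3 u)
    (hu3 : ∃ C₃ : ℝ, ∀ x, ‖iteratedFDeriv ℝ 3 u x‖ ≤ C₃)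
    (k₀ : EuclideanSpace ℝ (Fin N) → ℝ)
    (hk_int : Integrable k₀)
    (hk_nonneg : ∀ z, 0 ≤ k₀ z)
    (hk_sym : ∀ z z' : EuclideanSpace ℝ (Fin N), ‖z‖ = ‖z'‖ → k₀ z = k₀ z')
    (hk_supp : ∀ z : EuclideanSpace ℝ (Fin N), ‖z‖ > 1 → k₀ z = 0)
    (hk_total : ∫ z, k₀ z = 1)
    (C : ℝ)
    (hC : C = ((1 / 2) * ∫ z : EuclideanSpace ℝ (Fin N),
      k₀ z * (z ⟨N - 1, by omega⟩) ^ 2)⁻¹) :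
    ∃ M : ℝ, ∀ x : EuclideanSpace ℝ (Fin N), ∀ δ : ℝ, 0 < δ → δ ≤ 1 →
      |(C / δ ^ 2) *
          (∫ y : EuclideanSpace ℝ (Fin N),
            (δ ^ N)⁻¹ * k₀ (δ⁻¹ • (y - x)) * (u y - u x))
        - ∑ i : Fin N,
            fderiv ℝ (fun y => fderiv ℝ u y (EuclideanSpace.single i 1)) x
              (EuclideanSpace.single i 1)|
      ≤ M * δ := by
  obtain ⟨C₃, hC₃⟩ := hu3
  set i₀ : Fin N := ⟨N - 1, by omega⟩
  set S := ∫ z, k₀ z * z i₀ ^ 2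
  have hS : 0 < S := integral_mul_coord_sq_pos hk_int hk_nonneg hk_supp (by simp [hk_total]) i₀
  have hC_pos : 0 < C := by rw [hC]; positivity
  have hd : Differentiable ℝ (fderiv ℝ u) :=
    (hu.fderiv_right (m := 2) le_rfl).differentiable two_ne_zero
  refine ⟨C * C₃, fun x δ hδ _ => ?_⟩
  have hrescale := integral_rescaled_mul_eq volume k₀ (fun y => u y - u x) x hδ
  rw [finrank_euclideanSpace_fin] at hrescale
  simp only [hrescale, fderiv_clm_apply_const (hd x), ContinuousLinearMap.flip_apply]
  set I := ∫ z, k₀ z * (u (x + δ • z) - u x)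
  set Δu := ∑ i, fderiv ℝ (fderiv ℝ u) x (EuclideanSpace.single i 1) (EuclideanSpace.single i 1)
  have hscale : C / δ ^ 2 * (δ ^ 2 / 2 * S) = 1 := by rw [hC]; field_simp
  have hfactor : C / δ ^ 2 * I - Δu = C / δ ^ 2 * (I - δ ^ 2 / 2 * S * Δu) := by
    linear_combination Δu * hscale
  rw [hfactor, abs_mul, abs_of_pos (by positivity)]
  calc C / δ ^ 2 * |I - δ ^ 2 / 2 * S * Δu| ≤ C / δ ^ 2 * (C₃ * δ ^ 3) := by
        gcongr
        exact abs_integral_mul_sub_sub_laplacian_le hk_int hk_nonneg hk_sym hk_supp hk_total hu hC₃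
          x hδ.le i₀
    _ = C * C₃ * δ := by field_simp
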